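/- Let V = ℓ²(ℤ∖{0}, ℝ) and let K ⊆ V be the set of all x with |x_n| ≤ 1/n and |x_{−n}| ≤ 1/n² for all integers n > 0. Then K is a compact convex subset of V, and the map T : K → K defined by (Tx)_n = n·x_{−n} and (Tx)_{−n} = x_n/n for n > 0 is a well-defined continuous involution of K which preserves convex combinations; yet there is no continuous linear operator on V whose restriction to K equals T. -/

import Mathlib

open scoped ENNReal

/-- The real Hilbert space `ℓ²(ℤ∖{0})`. -/
noncomputable abbrev V18 := lp (fun _ : {n : ℤ // n ≠ 0} => ℝ) 2

/-- The compact convex set `K` of all `x` with `|x_n| ≤ 1/n` and `|x_{−n}| ≤ 1/n²`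
for every integer `n > 0`. -/
def K18 : Set V18 :=
  {x : V18 | ∀ m : {n : ℤ // n ≠ 0},
    (0 < m.1 → |x m| ≤ 1 / (m.1 : ℝ)) ∧ (m.1 < 0 → |x m| ≤ 1 / (m.1 : ℝ) ^ 2)}

/-- `T` is the transformation of `K` given coordinatewise by `(Tx)_n = n·x_{−n}` and
`(Tx)_{−n} = x_n/n` for integers `n > 0`. -/
def IsT18 (T : K18 → K18) : Prop :=
  ∀ (x : K18) (n : {m : ℤ // m ≠ 0}), 0 < n.1 →
    (T x : V18) n = (n.1 : ℝ) * (x : V18) ⟨-n.1, neg_ne_zero.mpr n.2⟩ ∧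
    (T x : V18) ⟨-n.1, neg_ne_zero.mpr n.2⟩ = (x : V18) n / (n.1 : ℝ)

/-!
`K` is the box `{x | ∀ m, |x m| ≤ w m}` of a square-summable weight `w`, hence compact: up to
`ε` it lies in a finite-dimensional box. `T` acts by `(Tx)_m = σ_m x_{-m}` with `σ_n = n` and
`σ_{-n} = 1/n`, so `σ_m σ_{-m} = 1` and `|σ_m| w_{-m} = w_m`. On the compact set `K` the norm
topology agrees with the pointwise one, in which `T` is clearly continuous. A continuous linear
extension `L` would satisfy `n ≤ ‖L‖` for every `n > 0`, by testing it on `n⁻² δ_{-n} ∈ K`,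
whose image is `n⁻¹ δ_n`.
-/

open Set

theorem Metric.totallyBounded_of_forall_exists_dist_lt {α : Type*} [PseudoMetricSpace α] {s : Set α}
    (h : ∀ ε > 0, ∃ t, TotallyBounded t ∧ ∀ x ∈ s, ∃ y ∈ t, dist x y < ε) :
    TotallyBounded s := by
  refine Metric.totallyBounded_iff.2 fun ε hε => ?_
  obtain ⟨t, ht, hst⟩ := h (ε / 2) (half_pos hε)
  obtain ⟨c, hc, htc⟩ := Metric.totallyBounded_iff.1 ht (ε / 2) (half_pos hε)
  refine ⟨c, hc, fun x hx => ?_⟩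
  obtain ⟨y, hy, hxy⟩ := hst x hx
  obtain ⟨z, hz, hyz⟩ := mem_iUnion₂.1 (htc hy)
  rw [Metric.mem_ball] at hyz
  exact mem_iUnion₂.2 ⟨z, hz, Metric.mem_ball.2 (by linarith [dist_triangle x y z])⟩

theorem lp.continuous_of_continuous_apply {ι X : Type*} {E : ι → Type*}
    [∀ i, NormedAddCommGroup (E i)] {p : ℝ≥0∞} [Fact (1 ≤ p)] [TopologicalSpace X]
    {s : Set (lp E p)} (hs : IsCompact s) {f : X → s}
    (hf : ∀ i, Continuous fun x => (f x : lp E p) i) : Continuous f := by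
  have := isCompact_iff_compactSpace.1 hs
  have he : Topology.IsClosedEmbedding fun x : s => ⇑(x : lp E p) :=
    (lp.uniformContinuous_coe.continuous.comp continuous_subtype_val).isClosedEmbedding
      fun x y h => Subtype.ext (lp.ext h)
  exact he.isEmbedding.continuous_iff.2 (continuous_pi hf)

section lpBox

variable {ι : Type*} {w : ι → ℝ}

variable (w) in
def lpBox : Set (lp (fun _ : ι => ℝ) 2) := {x | ∀ i, |x i| ≤ w i}

variable (w) in
theorem lpBox_eq_iInter :
    lpBox w = ⋂ i, (fun x : lp (fun _ : ι => ℝ) 2 => x i) ⁻¹' Icc (-w i) (w i) := by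
  ext x
  simp [lpBox, abs_le]

variable (w) in
theorem convex_lpBox : Convex ℝ (lpBox w) := by
  rw [lpBox_eq_iInter]
  exact convex_iInter fun i => (convex_Icc _ _).linear_preimage (lp.evalₗ _ 2 i)

variable (w) in
theorem isClosed_lpBox : IsClosed (lpBox w) := by
  rw [lpBox_eq_iInter]
  exact isClosed_iInter fun i => isClosed_Icc.preimage (lp.lipschitzWith_one_eval 2 i).continuous

theorem memℓp_of_abs_le (hw : Summable fun i => w i ^ 2) {f : ι → ℝ} (hf : ∀ i, |f i| ≤ w i) :
    Memℓp f 2 :=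
  Memℓp.mono (memℓp_gen (by simpa [Real.rpow_two] using hw)) hf

theorem single_mem_lpBox [DecidableEq ι] (hw : ∀ i, 0 ≤ w i) {i : ι} {c : ℝ} (hc : |c| ≤ w i) :
    lp.single 2 i c ∈ lpBox w := by
  intro j
  rcases eq_or_ne j i with rfl | hj
  · rwa [lp.single_apply_self]
  · rw [lp.single_apply_ne _ _ _ hj, abs_zero]
    exact hw j

theorem norm_sub_sum_single_sq_le [DecidableEq ι] {x : lp (fun _ : ι => ℝ) 2} (hx : x ∈ lpBox w)
    (hw : Summable fun i => w i ^ 2) (s : Finset ι) :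
    ‖x - ∑ i ∈ s, lp.single 2 i (x i)‖ ^ 2 ≤ ∑' i : {i // i ∉ s}, w i ^ 2 := by
  have hp : 0 < (2 : ℝ≥0∞).toReal := by norm_num
  have hx2 : Summable fun i => x i ^ 2 := by
    simpa [Real.rpow_two] using (lp.memℓp x).summable hp
  have hnorm := lp.norm_rpow_eq_tsum hp x
  have hcompl := lp.norm_compl_sum_single hp x s
  simp only [ENNReal.toReal_ofNat, Real.rpow_two, Real.norm_eq_abs, sq_abs] at hnorm hcompl
  rw [hcompl, hnorm, ← hx2.sum_add_tsum_subtype_compl s, add_sub_cancel_left]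
  refine (hx2.subtype _).tsum_le_tsum (fun i => ?_) (hw.subtype _)
  simpa only [sq_abs] using pow_le_pow_left₀ (abs_nonneg _) (hx i) 2

theorem totallyBounded_lpBox (hw : Summable fun i => w i ^ 2) : TotallyBounded (lpBox w) := by
  classical
  refine Metric.totallyBounded_of_forall_exists_dist_lt fun ε hε => ?_
  obtain ⟨s, hs⟩ : ∃ s : Finset ι, ∑' i : {i // i ∉ s}, w i ^ 2 < ε ^ 2 :=
    ((tendsto_order.1 (tendsto_tsum_compl_atTop_zero fun i => w i ^ 2)).2 _
      (by positivity)).exists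
  let trunc : (ι → ℝ) → lp (fun _ : ι => ℝ) 2 := fun v => ∑ i ∈ s, lp.single 2 i (v i)
  have htrunc : Continuous trunc :=
    continuous_finsetSum _ fun i _ => (lp.isometry_single i).continuous.comp (continuous_apply i)
  refine ⟨trunc '' univ.pi fun i => Icc (-w i) (w i),
    ((isCompact_univ_pi fun _ => isCompact_Icc).image htrunc).totallyBounded,
    fun x hx => ⟨trunc x, mem_image_of_mem _ fun i _ => abs_le.1 (hx i), ?_⟩⟩
  rw [dist_eq_norm]
  exact lt_of_pow_lt_pow_left₀ 2 hε.le ((norm_sub_sum_single_sq_le hx hw s).trans_lt hs)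

theorem isCompact_lpBox (hw : Summable fun i => w i ^ 2) : IsCompact (lpBox w) :=
  (totallyBounded_lpBox hw).isCompact_of_isClosed (isClosed_lpBox w)

end lpBox

local notation "ℤ₀" => {n : ℤ // n ≠ 0}

instance : InvolutiveNeg ℤ₀ where
  neg m := ⟨-m.1, neg_ne_zero.mpr m.2⟩
  neg_neg m := Subtype.ext (neg_neg m.1)

@[simp, norm_cast]
theorem Int.coe_neg_ne_zero (m : ℤ₀) : ((-m : ℤ₀) : ℤ) = -(m : ℤ) := rfl

namespace K18

noncomputable def weight (m : ℤ₀) : ℝ := if 0 < m.1 then 1 / (m.1 : ℝ) else 1 / (m.1 : ℝ) ^ 2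

theorem weight_nonneg (m : ℤ₀) : 0 ≤ weight m := by
  unfold weight; split_ifs with h
  · exact one_div_nonneg.2 (Int.cast_pos.2 h).le
  · positivity

theorem summable_weight_sq : Summable fun m => weight m ^ 2 := by
  refine .of_nonneg_of_le (fun _ => sq_nonneg _) (fun m => ?_)
    ((Real.summable_one_div_int_pow.2 one_lt_two).subtype fun n : ℤ => n ≠ 0)
  have hm : (1 : ℝ) ≤ (m.1 : ℝ) ^ 2 := by
    have : (1 : ℤ) ≤ m.1 ^ 2 := by rcases lt_or_gt_of_ne m.2 with h | h <;> nlinarith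
    exact_mod_cast this
  unfold weight; split_ifs
  · rw [div_pow, one_pow]; rfl
  · rw [div_pow, one_pow]
    exact one_div_le_one_div_of_le (by positivity) (le_self_pow₀ hm two_ne_zero)

theorem mem_iff_mem_lpBox {x : V18} : x ∈ K18 ↔ x ∈ lpBox weight := by
  refine forall_congr' fun m => ?_
  rcases lt_or_gt_of_ne m.2 with h | h
  · simp [weight, h, h.not_gt]
  · simp [weight, h, h.not_gt]

noncomputable def coeff (m : ℤ₀) : ℝ := if 0 < m.1 then m.1 else -(m.1 : ℝ)⁻¹

theorem coeff_mul_coeff_neg (m : ℤ₀) : coeff m * coeff (-m) = 1 := by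
  have hm : (m.1 : ℝ) ≠ 0 := Int.cast_ne_zero.2 m.2
  rcases lt_or_gt_of_ne m.2 with h | h
  · simp [coeff, h, h.not_gt, hm]
  · simp [coeff, h, h.not_gt, hm]

theorem abs_coeff_mul_weight_neg (m : ℤ₀) : |coeff m| * weight (-m) = weight m := by
  rcases lt_or_gt_of_ne m.2 with h | h
  · have hm : (m.1 : ℝ) < 0 := Int.cast_lt_zero.2 h
    simp [coeff, weight, h, h.not_gt, abs_of_neg hm]
    ring
  · have hm : 0 < (m.1 : ℝ) := Int.cast_pos.2 h
    simp [coeff, weight, h, h.not_gt, abs_of_pos hm]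
    field_simp

noncomputable def tFun (x : ℤ₀ → ℝ) (m : ℤ₀) : ℝ := coeff m * x (-m)

theorem abs_tFun_le {x : ℤ₀ → ℝ} (hx : ∀ m, |x m| ≤ weight m) (m : ℤ₀) :
    |tFun x m| ≤ weight m := by
  rw [tFun, abs_mul, ← abs_coeff_mul_weight_neg]
  exact mul_le_mul_of_nonneg_left (hx (-m)) (abs_nonneg _)

noncomputable def tMap (x : K18) : K18 :=
  have hx := abs_tFun_le (mem_iff_mem_lpBox.1 x.2)
  ⟨⟨tFun x, memℓp_of_abs_le summable_weight_sq hx⟩, mem_iff_mem_lpBox.2 hx⟩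

theorem tMap_apply (x : K18) (m : ℤ₀) : (tMap x : V18) m = coeff m * (x : V18) (-m) := rfl

theorem isT18_tMap : IsT18 tMap := by
  intro x n hn
  have hn' : ¬ 0 < (-n : ℤ₀).1 := by simpa using hn.le
  constructor
  · exact congrArg (· * _) (if_pos hn)
  · show coeff (-n) * (x : V18) (- -n) = _
    rw [neg_neg, coeff, if_neg hn']
    simp [div_eq_inv_mul]

theorem tMap_tMap (x : K18) : tMap (tMap x) = x := by
  ext m
  rw [tMap_apply, tMap_apply, neg_neg, ← mul_assoc, coeff_mul_coeff_neg, one_mul]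

theorem coe_tMap_of_eq_smul_add_smul (x y z : K18) (t : ℝ)
    (hz : (z : V18) = t • (x : V18) + (1 - t) • (y : V18)) :
    (tMap z : V18) = t • (tMap x : V18) + (1 - t) • (tMap y : V18) := by
  ext m
  simp only [tMap_apply, hz, lp.coeFn_add, lp.coeFn_smul, Pi.add_apply, Pi.smul_apply, smul_eq_mul]
  ring

theorem eq_lpBox : K18 = lpBox weight := Set.ext fun _ => mem_iff_mem_lpBox

theorem isCompact : IsCompact K18 := eq_lpBox ▸ isCompact_lpBox summable_weight_sq

theorem convex : Convex ℝ K18 := eq_lpBox ▸ convex_lpBox weight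

theorem continuous_tMap : Continuous tMap :=
  lp.continuous_of_continuous_apply isCompact fun m =>
    continuous_const.mul ((lp.lipschitzWith_one_eval 2 (-m)).continuous.comp continuous_subtype_val)

theorem single_mem {i : ℤ₀} {c : ℝ} (hc : |c| ≤ weight i) : lp.single 2 i c ∈ K18 :=
  mem_iff_mem_lpBox.2 (single_mem_lpBox weight_nonneg hc)

theorem tMap_single {i : ℤ₀} {c : ℝ} (hc : |c| ≤ weight i) :
    (tMap ⟨lp.single 2 i c, single_mem hc⟩ : V18) = lp.single 2 (-i) (coeff (-i) * c) := by
  ext m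
  rw [tMap_apply]
  rcases eq_or_ne m (-i) with rfl | hm
  · rw [neg_neg, lp.single_apply_self, lp.single_apply_self]
  · have hm' : -m ≠ i := fun h => hm (neg_eq_iff_eq_neg.1 h)
    rw [lp.single_apply_ne _ _ _ hm, lp.single_apply_ne _ _ _ hm', mul_zero]

theorem le_opNorm_of_eq_tMap {L : V18 →L[ℝ] V18} (hL : ∀ x : K18, L x = tMap x) {n : ℤ₀}
    (hn : 0 < n.1) : (n.1 : ℝ) ≤ ‖L‖ := by
  have hc : 0 < weight (-n) := by
    simpa [weight, hn.le.not_gt] using pow_pos (Int.cast_pos.2 hn) 2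
  have hcn : |weight (-n)| ≤ weight (-n) := (abs_of_pos hc).le
  let y : K18 := ⟨lp.single 2 (-n) (weight (-n)), single_mem hcn⟩
  refine le_of_mul_le_mul_right ?_ hc
  calc (n.1 : ℝ) * weight (-n) = ‖(tMap y : V18)‖ := by
        rw [tMap_single hcn, lp.norm_single two_pos, neg_neg, coeff, if_pos hn, Real.norm_eq_abs,
          abs_of_pos (mul_pos (Int.cast_pos.2 hn) hc)]
    _ = ‖L y‖ := by rw [hL]
    _ ≤ ‖L‖ * ‖(y : V18)‖ := L.le_opNorm _
    _ = ‖L‖ * weight (-n) := by rw [lp.norm_single two_pos, Real.norm_of_nonneg hc.le]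

theorem not_exists_clm_eq_tMap : ¬ ∃ L : V18 →L[ℝ] V18, ∀ x : K18, L x = tMap x := by
  rintro ⟨L, hL⟩
  obtain ⟨N, hN⟩ := exists_nat_gt ‖L‖
  have hN0 : 0 < N := by exact_mod_cast (norm_nonneg L).trans_lt hN
  have := le_opNorm_of_eq_tMap hL (n := ⟨N, by positivity⟩) (by simpa using hN0)
  push_cast at this
  linarith

end K18

/-- `K18` is a compact convex subset of `V = ℓ²(ℤ∖{0})`, the map `T` given by
`(Tx)_n = n·x_{−n}`, `(Tx)_{−n} = x_n/n` (for `n > 0`) is a well-defined continuous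
involution of `K18` preserving convex combinations, yet there is no continuous linear
operator on `V` whose restriction to `K18` equals `T`. -/
theorem no_linear_extension_of_T :
    IsCompact K18 ∧ Convex ℝ K18 ∧
    ∃ T : K18 → K18, IsT18 T ∧
      Continuous T ∧
      (∀ x : K18, T (T x) = x) ∧
      (∀ (x y z : K18) (t : ℝ), 0 ≤ t → t ≤ 1 →
        (z : V18) = t • (x : V18) + (1 - t) • (y : V18) →
        (T z : V18) = t • (T x : V18) + (1 - t) • (T y : V18)) ∧
      ¬ ∃ L : V18 →L[ℝ] V18, ∀ x : K18, L (x : V18) = (T x : V18) :=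
  ⟨K18.isCompact, K18.convex, K18.tMap, K18.isT18_tMap, K18.continuous_tMap, K18.tMap_tMap,
    fun x y z t _ _ hz => K18.coe_tMap_of_eq_smul_add_smul x y z t hz, K18.not_exists_clm_eq_tMap⟩
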